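/- Let X be a nonempty finite set, c : X → ℝ with c x ∈ {0,1} for all x, and r : X → ℝ with 0 ≤ r x ≤ 1 for all x. If r is perfectly calibrated and perfect for selective prediction, then r x ∈ {0,1} for every x ∈ X. -/

import Mathlib

/-! On a level set of `r`, perfect selective prediction forbids a correct and an incorrect
prediction from sharing a score, so `c` is constant there. Calibration then says that this
constant value of `c` is the score itself, so every score equals a correctness value. -/

open Finset

theorem Finset.sum_div_card_eq_of_forall_eq {ι K : Type*} [Semifield K] [CharZero K]
    {s : Finset ι} (hs : s.Nonempty) {f : ι → K} {a : K} (h : ∀ i ∈ s, f i = a) :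
    (∑ i ∈ s, f i) / #s = a := by
  rw [← expect_eq_sum_div_card, expect_congr rfl h, expect_const hs]

theorem correctness_eq_of_score_eq {α β : Type*} [Preorder β] {X : Finset α}
    {c : α → ℝ} {r : α → β} (hc : ∀ x ∈ X, c x = 0 ∨ c x = 1)
    (hsel : ∀ a ∈ X, ∀ b ∈ X, c a = 1 → c b = 0 → r b < r a)
    {x y : α} (hx : x ∈ X) (hy : y ∈ X) (hxy : r x = r y) : c x = c y := by
  rcases hc x hx with hx0 | hx1 <;> rcases hc y hy with hy0 | hy1
  · rw [hx0, hy0]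
  · exact absurd (hsel y hy x hx hy1 hx0) (hxy ▸ lt_irrefl _)
  · exact absurd (hsel x hx y hy hx1 hy0) (hxy ▸ lt_irrefl _)
  · rw [hx1, hy1]

theorem score_eq_correctness {α : Type*} {X : Finset α} {c r : α → ℝ}
    (hc : ∀ x ∈ X, c x = 0 ∨ c x = 1)
    (hcal : ∀ x ∈ X,
      (∑ y ∈ X.filter (fun y => r y = r x), c y) /
        ((X.filter (fun y => r y = r x)).card : ℝ) = r x)
    (hsel : ∀ a ∈ X, ∀ b ∈ X, c a = 1 → c b = 0 → r b < r a) :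
    ∀ x ∈ X, r x = c x := by
  intro x hx
  have hlevel : ∀ y ∈ X.filter (fun y => r y = r x), c y = c x := fun y hy ↦
    correctness_eq_of_score_eq hc hsel (mem_filter.mp hy).1 hx (mem_filter.mp hy).2
  have hxlevel : x ∈ X.filter (fun y => r y = r x) := mem_filter.mpr ⟨hx, rfl⟩
  rw [← hcal x hx, sum_div_card_eq_of_forall_eq ⟨x, hxlevel⟩ hlevel]

theorem perfect_both_implies_binary_scores_general {α : Type*}
    (X : Finset α)
    (c r : α → ℝ)
    (hc : ∀ x ∈ X, c x = 0 ∨ c x = 1)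
    (hcal : ∀ x ∈ X,
      (∑ y ∈ X.filter (fun y => r y = r x), c y) /
        ((X.filter (fun y => r y = r x)).card : ℝ) = r x)
    (hsel : ∀ a ∈ X, ∀ b ∈ X, c a = 1 → c b = 0 → r b < r a) :
    ∀ x ∈ X, r x = 0 ∨ r x = 1 := fun x hx ↦
  score_eq_correctness hc hcal hsel x hx ▸ hc x hx

/-- Forward direction of Proposition 2: perfect calibration together with perfect
selective prediction forces all confidence scores to be 0 or 1. -/
theorem perfect_both_implies_binary_scores {α : Type*} [DecidableEq α]
    (X : Finset α) (hX : X.Nonempty)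
    (c r : α → ℝ)
    (hc : ∀ x ∈ X, c x = 0 ∨ c x = 1)
    (hr : ∀ x ∈ X, 0 ≤ r x ∧ r x ≤ 1)
    (hcal : ∀ x ∈ X,
      (∑ y ∈ X.filter (fun y => r y = r x), c y) /
        ((X.filter (fun y => r y = r x)).card : ℝ) = r x)
    (hsel : ∀ a ∈ X, ∀ b ∈ X, c a = 1 → c b = 0 → r b < r a) :
    ∀ x ∈ X, r x = 0 ∨ r x = 1 :=
  perfect_both_implies_binary_scores_general X c r hc hcal hsel
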